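/- Verification of the reliable-adder architecture contract. Let di1, di2, do1, do2, do3, do4, a1i1, a1i2, a1o, a2i1, a2i2, a2o, mi1, mi2, mo : ℕ → ℕ. Assume: (dispatch) for all n, x, y: di1 n = x and di2 n = y imply do1 (n+1) = x, do2 (n+1) = y, do3 (n+1) = x and do4 (n+1) = y; (add1) for all n, x, y: a1i1 n = x and a1i2 n = y imply a1o (n+4) = x + y; (add2) for all n, x, y: a2i1 n = x and a2i2 n = y imply a2o (n+3) = x + y; (merge3) for all n, x: mi2 n = x and mi1 (n+1) = x imply mo (n+3) = x; and the connections: for all n, a1i1 n = do1 n, a1i2 n = do2 n, a2i1 n = do3 n, a2i2 n = do4 n, mi1 n = a1o n, and mi2 n = a2o n. Then for all n, x, y: if di1 n = x and di2 n = y, then mo (n+7) = x + y. -/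
import Mathlib

/-- Verification of the reliable-adder architecture contract:
from the component contracts of the dispatcher, the two adders and the merger,
together with the port connections, the composed system outputs the sum of its
two inputs after seven time units. -/
theorem reliable_adder_sum
    (di1 di2 do1 do2 do3 do4 a1i1 a1i2 a1o a2i1 a2i2 a2o mi1 mi2 mo : ℕ → ℕ)
    (dispatch : ∀ n x y, di1 n = x → di2 n = y →
      do1 (n + 1) = x ∧ do2 (n + 1) = y ∧ do3 (n + 1) = x ∧ do4 (n + 1) = y)
    (add1 : ∀ n x y, a1i1 n = x → a1i2 n = y → a1o (n + 4) = x + y)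
    (add2 : ∀ n x y, a2i1 n = x → a2i2 n = y → a2o (n + 3) = x + y)
    (merge3 : ∀ n x, mi2 n = x → mi1 (n + 1) = x → mo (n + 3) = x)
    (conn1 : ∀ n, a1i1 n = do1 n) (conn2 : ∀ n, a1i2 n = do2 n)
    (conn3 : ∀ n, a2i1 n = do3 n) (conn4 : ∀ n, a2i2 n = do4 n)
    (conn5 : ∀ n, mi1 n = a1o n) (conn6 : ∀ n, mi2 n = a2o n) :
    ∀ n x y, di1 n = x → di2 n = y → mo (n + 7) = x + y := by
  intro n x y h1 h2
  obtain ⟨d1, d2, d3, d4⟩ := dispatch n x y h1 h2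
  have ha1 : a1o (n + 1 + 4) = x + y :=
    add1 (n + 1) x y ((conn1 _).trans d1) ((conn2 _).trans d2)
  have ha2 : a2o (n + 1 + 3) = x + y :=
    add2 (n + 1) x y ((conn3 _).trans d3) ((conn4 _).trans d4)
  have hm := merge3 (n + 4) (x + y) ((conn6 _).trans ha2)
    (by rw [conn5]; show a1o (n + 5) = x + y; exact ha1)
  show mo (n + 4 + 3) = x + y
  exact hm
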